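/- Let A and B be disjoint bases of a matroid M, let a ∈ A, and let b ∈ Sym(a,A,B); set A' := A - a + b and B' := B - b + a. Let a' ∈ A - a. If b ∈ C(a',B) and a' ∈ C(b,A), then (Sym(a',A,B) △ Sym(a,A,B) △ Conn(a',a,A,B) △ Conn(a,a',A,B)) + a ⊆ Sym(a',A',B') ⊆ (Sym(a',A,B) ∪ Sym(a,A,B) ∪ Conn(a',a,A,B) ∪ Conn(a,a',A,B)) + a. -/

import Mathlib

/-!
The fundamental-circuit conditions say that `A - a' + b` and `B - b + a'` are bases as well.
Put `F = A - a - a'`. Then `cl(F + a)`, `cl(F + a')` and `cl(F + b)` are three distinct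
hyperplanes through `F`, and an element `y ∉ cl F` lies in exactly one hyperplane through `F`,
namely `cl(F + y)`. Hence, for `y ∈ B - b`, `A' - a' + y` is a base when exactly one of
`A - a + y`, `A - a' + y` is, and only when at least one of them is. Passing to the dual matroid
and its base `E - B` turns the conditions on `B - y + a`, `B - y + a'` and `B' - y + a'` into
conditions of the same kind. Writing `P, P'` and `Q, Q'` for the two pairs of conditions, the
symmetric difference of the four sets `Sym`, `Conn` is `{y ∈ B | (P ⊕ P') ∧ (Q ⊕ Q')}` and
their union is `{y ∈ B | (P ∨ P') ∧ (Q ∨ Q')}`.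
-/

open Set

variable {α : Type*}

/-- A circuit: a minimal dependent set. -/
def IsCircuit (M : Matroid α) (C : Set α) : Prop :=
  M.Dep C ∧ ∀ D, D ⊂ C → M.Indep D

/-- `C` is the fundamental circuit of `x` with respect to the basis `B`:
the unique circuit contained in `B ∪ {x}`. -/
def IsFundCct (M : Matroid α) (C : Set α) (x : α) (B : Set α) : Prop :=
  IsCircuit M C ∧ x ∈ C ∧ C ⊆ insert x B

/-- `SymEx M a A B` : the elements `b ∈ B` such that `A - a + b` and `B - b + a` are bases. -/
def SymEx (M : Matroid α) (a : α) (A B : Set α) : Set α :=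
  {b ∈ B | M.IsBase (insert b (A \ {a})) ∧ M.IsBase (insert a (B \ {b}))}

/-- `ConnEx M a a' A B` : the elements `b ∈ B` such that `A - a' + b` and `B - b + a` are bases. -/
def ConnEx (M : Matroid α) (a a' : α) (A B : Set α) : Set α :=
  {b ∈ B | M.IsBase (insert b (A \ {a'})) ∧ M.IsBase (insert a (B \ {b}))}

/-- A binary matroid, via the circuit characterization: the symmetric difference of
any two distinct circuits contains a circuit. -/
def Binary (M : Matroid α) : Prop :=
  ∀ C₁ C₂, IsCircuit M C₁ → IsCircuit M C₂ → C₁ ≠ C₂ →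
    ∃ C, IsCircuit M C ∧ C ⊆ symmDiff C₁ C₂

/-- A hyperplane: a maximal proper flat. -/
def IsHyperplane (M : Matroid α) (H : Set α) : Prop :=
  M.IsFlat H ∧ H ≠ M.E ∧ ∀ F, M.IsFlat F → H ⊂ F → F = M.E

lemma Set.sdiff_insert_sdiff_singleton {E B : Set α} {x y : α} (hyE : y ∈ E) (hxy : x ≠ y) :
    E \ insert x (B \ {y}) = insert y ((E \ B) \ {x}) := by
  ext z
  simp only [mem_sdiff, mem_insert_iff, mem_singleton_iff]
  grind

lemma Set.insert_sdiff_pair {s : Set α} {x y : α} (hx : x ∈ s) (hxy : x ≠ y) :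
    insert x (s \ {x, y}) = s \ {y} := by
  ext z
  simp only [mem_insert_iff, mem_sdiff, mem_singleton_iff]
  grind

lemma Set.sep_symmDiff_four (S : Set α) (P P' Q Q' : α → Prop) :
    symmDiff (symmDiff (symmDiff {z ∈ S | P z ∧ Q z} {z ∈ S | P' z ∧ Q' z})
      {z ∈ S | P' z ∧ Q z}) {z ∈ S | P z ∧ Q' z} =
      {z ∈ S | ¬(P z ↔ P' z) ∧ ¬(Q z ↔ Q' z)} := by
  ext z
  simp only [mem_symmDiff, mem_ofPred_eq]
  tauto

lemma Set.sep_union_four (S : Set α) (P P' Q Q' : α → Prop) :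
    {z ∈ S | P z ∧ Q z} ∪ {z ∈ S | P' z ∧ Q' z} ∪ {z ∈ S | P' z ∧ Q z} ∪
      {z ∈ S | P z ∧ Q' z} =
      {z ∈ S | (P z ∨ P' z) ∧ (Q z ∨ Q' z)} := by
  ext z
  simp only [mem_union, mem_ofPred_eq]
  tauto

namespace Matroid

variable {M : Matroid α} {A B C F : Set α} {a a' b e x y : α}

lemma notMem_closure_insert_of_not_iff (ha : b ∉ M.closure (insert a F))
    (ha' : b ∉ M.closure (insert a' F))
    (h : ¬(y ∈ M.closure (insert a F) ↔ y ∈ M.closure (insert a' F))) :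
    y ∉ M.closure (insert b F) := by
  have hyF : y ∉ M.closure F := fun hyF ↦ h <|
    iff_of_true (M.closure_subset_closure (subset_insert _ _) hyF)
      (M.closure_subset_closure (subset_insert _ _) hyF)
  intro hyb
  have hby : b ∈ M.closure (insert y F) := mem_closure_insert hyF hyb
  refine h (iff_of_false (fun hya ↦ ha ?_) (fun hya' ↦ ha' ?_))
  · rwa [← closure_insert_congr ⟨hya, hyF⟩]
  · rwa [← closure_insert_congr ⟨hya', hyF⟩]

lemma notMem_closure_insert_or_notMem_closure_insert (hyF : y ∉ M.closure F)
    (ha' : a' ∉ M.closure (insert a F)) :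
    y ∉ M.closure (insert a F) ∨ y ∉ M.closure (insert a' F) := by
  by_contra! ⟨hya, hya'⟩
  exact ha' (closure_insert_congr ⟨hya, hyF⟩ ▸ mem_closure_insert hyF hya')

lemma IsBase.insert_sdiff_isBase_iff (hA : M.IsBase A) (hx : x ∈ A) (heA : e ∉ A)
    (he : e ∈ M.E) : M.IsBase (insert e (A \ {x})) ↔ e ∉ M.closure (A \ {x}) := by
  refine ⟨fun h ↦ ?_, fun h ↦ hA.exchange_base_of_notMem_closure hx h he⟩
  simpa [insert_sdiff_self_of_notMem (fun h ↦ heA h.1 : e ∉ A \ {x})] using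
    h.indep.notMem_closure_sdiff_of_mem (mem_insert e _)

lemma IsBase.insert_sdiff_isBase_iff_dual (hB : M.IsBase B) (hy : y ∈ B) (hxE : x ∈ M.E)
    (hxB : x ∉ B) :
    M.IsBase (insert x (B \ {y})) ↔ M✶.IsBase (insert y ((M.E \ B) \ {x})) := by
  have hsub : insert x (B \ {y}) ⊆ M.E := insert_subset hxE (sdiff_subset.trans hB.subset_ground)
  rw [← sdiff_insert_sdiff_singleton (hB.subset_ground hy) (by rintro rfl; exact hxB hy),
    dual_isBase_iff sdiff_subset, sdiff_sdiff_cancel_left hsub]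

lemma IsFundCct.isBase_insert_sdiff (hA : M.IsBase A) (hC : IsFundCct M C e A) (heA : e ∉ A)
    (hxC : x ∈ C) (hxA : x ∈ A) : M.IsBase (insert e (A \ {x})) := by
  have hC' : M.IsCircuit C := isCircuit_iff_forall_ssubset.2 ⟨hC.1.1, fun I hI ↦ hC.1.2 I hI⟩
  rw [insert_sdiff_singleton_comm (by rintro rfl; exact heA hxA)]
  exact hA.isBase_insert_sdiff_of_mem_closure
    (M.closure_subset_closure (sdiff_subset_sdiff_left hC.2.2)
      (hC'.mem_closure_sdiff_singleton_of_mem hxC)) (.inr hxA)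

lemma IsBase.isBase_insert_sdiff_or_of_indep (hA : M.IsBase A) (ha : a ∈ A) (ha' : a' ∈ A)
    (hne : a ≠ a') (hyA : y ∉ A) (hy : M.Indep (insert y (A \ {a, a'}))) :
    M.IsBase (insert y (A \ {a'})) ∨ M.IsBase (insert y (A \ {a})) := by
  have hyE : y ∈ M.E := hy.subset_ground (mem_insert y _)
  have hAa' : insert a (A \ {a, a'}) = A \ {a'} := insert_sdiff_pair ha hne
  have hAa : insert a' (A \ {a, a'}) = A \ {a} := pair_comm a a' ▸ insert_sdiff_pair ha' hne.symm
  have hyF : y ∉ M.closure (A \ {a, a'}) := by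
    simpa [insert_sdiff_self_of_notMem (fun h ↦ hyA h.1 : y ∉ A \ {a, a'})] using
      hy.notMem_closure_sdiff_of_mem (mem_insert y _)
  have ha'F : a' ∉ M.closure (insert a (A \ {a, a'})) :=
    hAa' ▸ hA.indep.notMem_closure_sdiff_of_mem ha'
  rw [hA.insert_sdiff_isBase_iff ha' hyA hyE, hA.insert_sdiff_isBase_iff ha hyA hyE, ← hAa,
    ← hAa']
  exact notMem_closure_insert_or_notMem_closure_insert hyF ha'F

lemma IsBase.isBase_insert_sdiff_of_not_iff (hA : M.IsBase A) (ha : a ∈ A) (ha' : a' ∈ A)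
    (hne : a ≠ a') (hbA : b ∉ A) (hab : M.IsBase (insert b (A \ {a})))
    (ha'b : M.IsBase (insert b (A \ {a'}))) (hyE : y ∈ M.E) (hyA : y ∉ A) (hyb : y ≠ b)
    (h : ¬(M.IsBase (insert y (A \ {a'})) ↔ M.IsBase (insert y (A \ {a})))) :
    M.IsBase (insert y (insert b (A \ {a}) \ {a'})) := by
  have hbE : b ∈ M.E := hab.subset_ground (mem_insert b _)
  have hAa' : insert a (A \ {a, a'}) = A \ {a'} := insert_sdiff_pair ha hne
  have hAa : insert a' (A \ {a, a'}) = A \ {a} := pair_comm a a' ▸ insert_sdiff_pair ha' hne.symm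
  have hyA' : y ∉ insert b (A \ {a}) := by rintro (rfl | h); exacts [hyb rfl, hyA h.1]
  rw [hab.insert_sdiff_isBase_iff (.inr ⟨ha', hne.symm⟩) hyA' hyE,
    ← insert_sdiff_singleton_comm (by rintro rfl; exact hbA ha'), sdiff_sdiff, singleton_union]
  rw [hA.insert_sdiff_isBase_iff ha hbA hbE, ← hAa] at hab
  rw [hA.insert_sdiff_isBase_iff ha' hbA hbE, ← hAa'] at ha'b
  rw [hA.insert_sdiff_isBase_iff ha' hyA hyE, hA.insert_sdiff_isBase_iff ha hyA hyE, ← hAa,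
    ← hAa', not_iff_not] at h
  exact notMem_closure_insert_of_not_iff ha'b hab h

lemma IsBase.isBase_insert_sdiff_or_of_isBase_insert_sdiff (hB : M.IsBase B) (haE : a ∈ M.E)
    (ha'E : a' ∈ M.E) (haB : a ∉ B) (ha'B : a' ∉ B) (hne : a ≠ a') (hyB : y ∈ B)
    (h : M.IsBase (insert a' (insert a (B \ {b}) \ {y}))) :
    M.IsBase (insert a' (B \ {y})) ∨ M.IsBase (insert a (B \ {y})) := by
  rw [hB.insert_sdiff_isBase_iff_dual hyB ha'E ha'B, hB.insert_sdiff_isBase_iff_dual hyB haE haB]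
  refine hB.compl_isBase_dual.isBase_insert_sdiff_or_of_indep ⟨haE, haB⟩ ⟨ha'E, ha'B⟩ hne
    (fun h ↦ h.2 hyB) (h.compl_isBase_dual.indep.subset ?_)
  intro z
  simp only [mem_insert_iff, mem_sdiff, mem_singleton_iff]
  grind [hB.subset_ground hyB]

lemma IsBase.isBase_insert_insert_sdiff_of_not_iff (hB : M.IsBase B) (hbB : b ∈ B)
    (haE : a ∈ M.E) (ha'E : a' ∈ M.E) (haB : a ∉ B) (ha'B : a' ∉ B) (hne : a ≠ a')
    (hab : M.IsBase (insert a (B \ {b}))) (ha'b : M.IsBase (insert a' (B \ {b})))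
    (hyB : y ∈ B) (hyb : y ≠ b)
    (h : ¬(M.IsBase (insert a' (B \ {y})) ↔ M.IsBase (insert a (B \ {y})))) :
    M.IsBase (insert a' (insert a (B \ {b}) \ {y})) := by
  have ha'B' : a' ∉ insert a (B \ {b}) := by rintro (h | h); exacts [hne h.symm, ha'B h.1]
  rw [hab.insert_sdiff_isBase_iff_dual (.inr ⟨hyB, hyb⟩) ha'E ha'B',
    sdiff_insert_sdiff_singleton (hB.subset_ground hbB) (by rintro rfl; exact haB hbB)]
  rw [hB.insert_sdiff_isBase_iff_dual hyB ha'E ha'B, hB.insert_sdiff_isBase_iff_dual hyB haE haB]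
    at h
  rw [hB.insert_sdiff_isBase_iff_dual hbB haE haB] at hab
  rw [hB.insert_sdiff_isBase_iff_dual hbB ha'E ha'B] at ha'b
  exact hB.compl_isBase_dual.isBase_insert_sdiff_of_not_iff ⟨haE, haB⟩ ⟨ha'E, ha'B⟩ hne
    (fun h ↦ h.2 hbB) hab ha'b (hB.subset_ground hyB) (fun h ↦ h.2 hyB) hyb h

end Matroid

open Matroid in
theorem stmt_9_general (M : Matroid α) {A B Ca' Cb : Set α} {a a' b : α}
    (hA : M.IsBase A) (hB : M.IsBase B) (hAB : Disjoint A B)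
    (ha : a ∈ A) (hb : b ∈ SymEx M a A B)
    (ha' : a' ∈ A) (hne : a' ≠ a)
    (hCa' : IsFundCct M Ca' a' B) (hCb : IsFundCct M Cb b A)
    (h1 : b ∈ Ca') (h2 : a' ∈ Cb) :
    insert a (symmDiff (symmDiff (symmDiff (SymEx M a' A B) (SymEx M a A B))
          (ConnEx M a' a A B)) (ConnEx M a a' A B))
        ⊆ SymEx M a' (insert b (A \ {a})) (insert a (B \ {b})) ∧
      SymEx M a' (insert b (A \ {a})) (insert a (B \ {b}))
        ⊆ insert a (SymEx M a' A B ∪ SymEx M a A B ∪ ConnEx M a' a A B ∪ ConnEx M a a' A B) := by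
  obtain ⟨hbB, hAb, hBa⟩ := hb
  have hbA : b ∉ A := disjoint_right.1 hAB hbB
  have haB : a ∉ B := disjoint_left.1 hAB ha
  have ha'B : a' ∉ B := disjoint_left.1 hAB ha'
  have haE : a ∈ M.E := hA.subset_ground ha
  have ha'E : a' ∈ M.E := hA.subset_ground ha'
  have hA'b : M.IsBase (insert b (A \ {a'})) := hCb.isBase_insert_sdiff hA hbA h2 ha'
  have hB'a' : M.IsBase (insert a' (B \ {b})) := hCa'.isBase_insert_sdiff hB ha'B h1 hbB
  simp only [SymEx, ConnEx]
  rw [sep_symmDiff_four, sep_union_four]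
  refine ⟨?_, ?_⟩
  · rintro y (rfl | ⟨hyB, hAy, hBy⟩)
    · refine ⟨mem_insert y _, ?_, ?_⟩
      · rwa [← insert_sdiff_singleton_comm (by rintro rfl; exact hbA ha'), insert_comm,
          sdiff_sdiff, singleton_union, insert_sdiff_pair ha hne.symm]
      · rwa [insert_sdiff_self_of_notMem (fun h ↦ haB h.1)]
    · have hyb : y ≠ b := by rintro rfl; exact hAy (iff_of_true hA'b hAb)
      have hyA : y ∉ A := disjoint_right.1 hAB hyB
      exact ⟨.inr ⟨hyB, hyb⟩,
        hA.isBase_insert_sdiff_of_not_iff ha ha' hne.symm hbA hAb hA'b (hB.subset_ground hyB)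
          hyA hyb hAy,
        hB.isBase_insert_insert_sdiff_of_not_iff hbB haE ha'E haB ha'B hne.symm hBa hB'a' hyB hyb
          hBy⟩
  · rintro y ⟨rfl | ⟨hyB, hyb⟩, hD, hE⟩
    · exact .inl rfl
    · have hyA : y ∉ A := disjoint_right.1 hAB hyB
      have hDF : insert y (A \ {a, a'}) ⊆ insert y (insert b (A \ {a}) \ {a'}) :=
        insert_subset_insert fun z ⟨hzA, hz⟩ ↦
          ⟨.inr ⟨hzA, fun h ↦ hz (.inl h)⟩, fun h ↦ hz (.inr h)⟩
      exact .inr ⟨hyB,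
        hA.isBase_insert_sdiff_or_of_indep ha ha' hne.symm hyA (hD.indep.subset hDF),
        hB.isBase_insert_sdiff_or_of_isBase_insert_sdiff haE ha'E haB ha'B hne.symm hyB hE⟩

theorem stmt_9 (M : Matroid α) [M.Finite] {A B Ca' Cb : Set α} {a a' b : α}
    (hA : M.IsBase A) (hB : M.IsBase B) (hAB : Disjoint A B)
    (ha : a ∈ A) (hb : b ∈ SymEx M a A B)
    (ha' : a' ∈ A) (hne : a' ≠ a)
    (hCa' : IsFundCct M Ca' a' B) (hCb : IsFundCct M Cb b A)
    (h1 : b ∈ Ca') (h2 : a' ∈ Cb) :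
    insert a (symmDiff (symmDiff (symmDiff (SymEx M a' A B) (SymEx M a A B))
          (ConnEx M a' a A B)) (ConnEx M a a' A B))
        ⊆ SymEx M a' (insert b (A \ {a})) (insert a (B \ {b})) ∧
      SymEx M a' (insert b (A \ {a})) (insert a (B \ {b}))
        ⊆ insert a (SymEx M a' A B ∪ SymEx M a A B ∪ ConnEx M a' a A B ∪ ConnEx M a a' A B) :=
  stmt_9_general M hA hB hAB ha hb ha' hne hCa' hCb h1 h2
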